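/- (Equivalence of KL and DKL gradients.) Let C ≥ 1 and fix a point (a, b) ∈ ℝ^C × ℝ^C. Write s_a = softmax(a), and set w_{j,k} = (s_a)_j · (s_a)_k. Define the frozen wMSE function F(x) = (1/4) · Σ_{j,k=1}^C w_{j,k} · (Δ(x)_{j,k} − Δ(b)_{j,k})² and the frozen cross-entropy function G(y) = −Σ_{j=1}^C (s_a)_j · log softmax(y)_j, where w, Δ(b), and s_a are constants determined by the point (a, b). Then for every index i: (1) the partial derivative of o_m ↦ L_KL(o_m, b) at o_m = a in coordinate i equals ∂F/∂x_i evaluated at x = a; and (2) the partial derivative of o_n ↦ L_KL(a, o_n) at o_n = b in coordinate i equals ∂G/∂y_i evaluated at y = b. Hence the DKL loss with α = 1, β = 1 and weight √(w) produces exactly the same gradients on both logit arguments as the KL loss. -/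

import Mathlib

open Real

/-- softmax of logits `o : Fin C → ℝ`. -/
noncomputable def softmax {C : ℕ} (o : Fin C → ℝ) (j : Fin C) : ℝ :=
  Real.exp (o j) / ∑ k, Real.exp (o k)

/-- KL divergence loss between logits `o_m`, `o_n`. -/
noncomputable def LKL {C : ℕ} (om oN : Fin C → ℝ) : ℝ :=
  ∑ j, softmax om j * Real.log (softmax om j / softmax oN j)

/-!
With `p = softmax a` and `u = a - b`, both partial derivatives in the first argument equal
`p i * ∑ k, p k * (u i - u k) = p i * (u i - 𝔼_p u)`. For the KL loss this follows from
`log (softmax x j) = x j - logSumExp x`, which reduces `L_KL(x, b)` to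
`∑ j, softmax x j * (x j - b j)` up to log-sum-exp terms, and from
`∂ᵢ softmax x j = p j * (δᵢⱼ - p i)`. For the weighted MSE, the `(j, k)` summand has derivative
`2 wⱼₖ (uⱼ - uₖ) (δᵢⱼ - δᵢₖ)`, and since `wⱼₖ (uⱼ - uₖ)` is antisymmetric the pairs with `k = i`
contribute as much as those with `j = i`. In the second argument, `L_KL(a, ·)` and the
cross-entropy differ by the negative entropy of `p`, a constant.
-/

open Finset Function

variable {C : ℕ}

noncomputable def logSumExp (o : Fin C → ℝ) : ℝ := Real.log (∑ k, Real.exp (o k))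

section Nonempty

variable [Nonempty (Fin C)]

lemma sum_exp_pos (o : Fin C → ℝ) : 0 < ∑ k, Real.exp (o k) :=
  sum_pos (fun _ _ => exp_pos _) univ_nonempty

lemma softmax_eq_exp_sub_logSumExp (o : Fin C → ℝ) (j : Fin C) :
    softmax o j = Real.exp (o j - logSumExp o) := by
  rw [softmax, logSumExp, exp_sub, exp_log (sum_exp_pos o)]

lemma softmax_pos (o : Fin C → ℝ) (j : Fin C) : 0 < softmax o j :=
  div_pos (exp_pos _) (sum_exp_pos o)

lemma sum_softmax (o : Fin C → ℝ) : ∑ j, softmax o j = 1 := by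
  simp only [softmax]
  rw [← sum_div, div_self (sum_exp_pos o).ne']

lemma log_softmax (o : Fin C → ℝ) (j : Fin C) : Real.log (softmax o j) = o j - logSumExp o := by
  rw [softmax_eq_exp_sub_logSumExp, log_exp]

lemma LKL_eq_sum_softmax_mul_sub_add_logSumExp (om oN : Fin C → ℝ) :
    LKL om oN = ∑ j, softmax om j * (om j - oN j) - logSumExp om + logSumExp oN := by
  have h : ∀ j, Real.log (softmax om j / softmax oN j)
      = (om j - oN j) - logSumExp om + logSumExp oN := fun j => by
    rw [log_div (softmax_pos om j).ne' (softmax_pos oN j).ne', log_softmax, log_softmax]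
    ring
  simp only [LKL, h, mul_add, mul_sub, sum_add_distrib, sum_sub_distrib, ← sum_mul, sum_softmax,
    one_mul]

lemma LKL_eq_neg_entropy_add_crossEntropy (om oN : Fin C → ℝ) :
    LKL om oN = ∑ j, softmax om j * Real.log (softmax om j)
      + -∑ j, softmax om j * Real.log (softmax oN j) := by
  rw [← sub_eq_add_neg, ← sum_sub_distrib]
  refine sum_congr rfl fun j _ => ?_
  rw [log_div (softmax_pos om j).ne' (softmax_pos oN j).ne', mul_sub]

end Nonempty

lemma hasDerivAt_update_apply (a : Fin C → ℝ) (i j : Fin C) (t : ℝ) :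
    HasDerivAt (fun t => update a i t j) ((Pi.single i 1 : Fin C → ℝ) j) t :=
  hasDerivAt_pi.1 (hasDerivAt_update a i t) j

lemma hasDerivAt_logSumExp_update (a : Fin C → ℝ) (i : Fin C) :
    HasDerivAt (fun t => logSumExp (update a i t)) (softmax a i) (a i) := by
  have hsum : HasDerivAt (fun t => ∑ k, Real.exp (update a i t k)) (Real.exp (a i)) (a i) := by
    have := HasDerivAt.fun_sum fun k (_ : k ∈ univ) =>
      (hasDerivAt_update_apply a i k (a i)).exp
    simpa [Pi.single_apply] using this
  have : Nonempty (Fin C) := ⟨i⟩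
  have hlog := hsum.log (by simpa only [update_eq_self] using (sum_exp_pos a).ne')
  simp only [update_eq_self] at hlog
  exact hlog

lemma hasDerivAt_softmax_update (a : Fin C → ℝ) (i j : Fin C) :
    HasDerivAt (fun t => softmax (update a i t) j)
      (softmax a j * ((Pi.single i 1 : Fin C → ℝ) j - softmax a i)) (a i) := by
  have : Nonempty (Fin C) := ⟨i⟩
  have h := ((hasDerivAt_update_apply a i j (a i)).fun_sub (hasDerivAt_logSumExp_update a i)).exp
  simp only [update_eq_self, ← softmax_eq_exp_sub_logSumExp] at h
  exact h

lemma hasDerivAt_LKL_update_left (a b : Fin C → ℝ) (i : Fin C) :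
    HasDerivAt (fun t => LKL (update a i t) b)
      (softmax a i * ∑ k, softmax a k * ((a i - b i) - (a k - b k))) (a i) := by
  have : Nonempty (Fin C) := ⟨i⟩
  simp only [LKL_eq_sum_softmax_mul_sub_add_logSumExp]
  have hsum := HasDerivAt.fun_sum fun j (_ : j ∈ univ) => (hasDerivAt_softmax_update a i j).mul
    ((hasDerivAt_update_apply a i j (a i)).sub_const (b j))
  refine ((hsum.sub (hasDerivAt_logSumExp_update a i)).add_const (logSumExp b)).congr_deriv ?_
  simp only [update_eq_self, Pi.single_apply, mul_sub, sub_mul, sum_add_distrib, sum_sub_distrib,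
    mul_ite, ite_mul, mul_one, mul_zero, zero_mul, sum_ite_eq', mem_univ, if_true, ← sum_mul,
    sum_softmax, mul_sum]
  ring_nf

lemma sum_sum_mul_single_sub_single {ι R : Type*} [Fintype ι] [DecidableEq ι] [CommRing R]
    (D : ι → ι → R) (hD : ∀ j k, D k j = -D j k) (i : ι) :
    ∑ j, ∑ k, D j k * ((Pi.single i 1 : ι → R) j - (Pi.single i 1 : ι → R) k)
      = 2 * ∑ k, D i k := by
  simp only [mul_sub, sum_sub_distrib, Pi.single_apply, mul_ite, mul_one, mul_zero, sum_ite_eq',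
    mem_univ, if_true]
  rw [sum_comm]
  have hcol : ∑ j, D j i = -∑ k, D i k := by
    rw [← sum_neg_distrib]
    exact sum_congr rfl fun k _ => hD i k
  simp only [sum_ite_eq', mem_univ, if_true, hcol]
  ring

lemma hasDerivAt_pairwise_sq_update (p a b : Fin C → ℝ) (i : Fin C) :
    HasDerivAt (fun t => (1 / 4 : ℝ) * ∑ j, ∑ k,
        (p j * p k) * ((update a i t j - update a i t k) - (b j - b k)) ^ 2)
      (p i * ∑ k, p k * ((a i - b i) - (a k - b k))) (a i) := by
  let D : Fin C → Fin C → ℝ := fun j k => 2 * (p j * p k) * ((a j - a k) - (b j - b k))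
  have hterm : ∀ j k, HasDerivAt
      (fun t => (p j * p k) * ((update a i t j - update a i t k) - (b j - b k)) ^ 2)
      (D j k * ((Pi.single i 1 : Fin C → ℝ) j - (Pi.single i 1 : Fin C → ℝ) k)) (a i) :=
    fun j k => by
      have hdiff := ((hasDerivAt_update_apply a i j (a i)).fun_sub
        (hasDerivAt_update_apply a i k (a i))).sub_const (b j - b k)
      refine ((hdiff.fun_pow 2).const_mul (p j * p k)).congr_deriv ?_
      simp only [D, update_eq_self]
      push_cast
      ring
  refine ((HasDerivAt.fun_sum fun j _ => HasDerivAt.fun_sum fun k _ => hterm j k).const_mul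
    (1 / 4 : ℝ)).congr_deriv ?_
  rw [sum_sum_mul_single_sub_single D (fun j k => by simp only [D]; ring) i, ← mul_assoc, mul_sum,
    mul_sum]
  exact sum_congr rfl fun k _ => by simp only [D]; ring

theorem kl_dkl_gradient_equivalence_general (C : ℕ) (a b : Fin C → ℝ) (i : Fin C) :
    (deriv (fun t => LKL (Function.update a i t) b) (a i)
      = deriv
          (fun t => (1 / 4 : ℝ) * ∑ j, ∑ k,
            (softmax a j * softmax a k) *
              (((Function.update a i t) j - (Function.update a i t) k) - (b j - b k)) ^ 2)
          (a i)) ∧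
    (deriv (fun t => LKL a (Function.update b i t)) (b i)
      = deriv
          (fun t => -∑ j, softmax a j * Real.log (softmax (Function.update b i t) j))
          (b i)) := by
  have : Nonempty (Fin C) := ⟨i⟩
  constructor
  · rw [(hasDerivAt_LKL_update_left a b i).deriv,
      (hasDerivAt_pairwise_sq_update (softmax a) a b i).deriv]
  · simp only [LKL_eq_neg_entropy_add_crossEntropy]
    exact deriv_const_add _

/-- Equivalence of KL and DKL gradients at a fixed point `(a, b)`.
With `s_a = softmax a`, `w_{j,k} = (s_a)_j (s_a)_k` frozen, the frozen wMSE
`F(x) = (1/4) ∑_{j,k} w_{j,k} ((x_j - x_k) - (b_j - b_k))²` has the same partial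
derivatives at `x = a` as `o_m ↦ L_KL(o_m, b)`, and the frozen cross-entropy
`G(y) = -∑ j, (s_a)_j log (softmax y)_j` has the same partial derivatives at
`y = b` as `o_n ↦ L_KL(a, o_n)`. -/
theorem kl_dkl_gradient_equivalence (C : ℕ) (hC : 1 ≤ C) (a b : Fin C → ℝ) (i : Fin C) :
    (deriv (fun t => LKL (Function.update a i t) b) (a i)
      = deriv
          (fun t => (1 / 4 : ℝ) * ∑ j, ∑ k,
            (softmax a j * softmax a k) *
              (((Function.update a i t) j - (Function.update a i t) k) - (b j - b k)) ^ 2)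
          (a i)) ∧
    (deriv (fun t => LKL a (Function.update b i t)) (b i)
      = deriv
          (fun t => -∑ j, softmax a j * Real.log (softmax (Function.update b i t) j))
          (b i)) :=
  kl_dkl_gradient_equivalence_general C a b i
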